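/- arXiv:math/0201010 — 2 statements merged into one kernel-verified Lean document; each statement's English description precedes it below -/
import Mathlib

section
/- There exists a constant C > 0 such that for every function f holomorphic in a neighborhood of the closed disc of radius 3, setting A = ∫_{3T} ln⁺|f(ζ)| dm(ζ), one has ln ∫_{2T} |f(ζ)| dm(ζ) ≤ C·A. -/
/-!
Approximate `log⁺ ‖f‖` on the circle of radius `R` from above, within `ε`, by the real part of an
entire function `Q`: trigonometric polynomials are dense in the continuous functions on the
circle, and the real part of each of them is the boundary value of the real part of a polynomial.
The maximum modulus principle for `exp (-Q) • f` gives `‖f‖ ≤ exp (re Q)` inside the disc, and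
Harnack's inequality bounds `re Q w` by `(R + ‖w‖) / (R - ‖w‖)` times its circle average, which
is at most `A + ε`; for `R = 3` and `‖w‖ = 2` that factor is `5`.
-/

noncomputable def circAvg (r : ℝ) (u : ℂ → ℝ) : ℝ :=
  (2 * Real.pi)⁻¹ * ∫ θ in (0:ℝ)..(2 * Real.pi), u (circleMap 0 r θ)

open Metric Real Set InnerProductSpace

theorem circAvg_eq_circleAverage (r : ℝ) (u : ℂ → ℝ) : circAvg r u = circleAverage u 0 r := rfl

section FourierApproximation

local instance : Fact (0 < 2 * π) := ⟨two_pi_pos⟩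

variable {R : ℝ}

theorem fourier_natCast_coe_eq_pow (hR : R ≠ 0) (m : ℕ) (θ : ℝ) :
    fourier (m : ℤ) (θ : AddCircle (2 * π)) = (circleMap 0 R θ / R) ^ m := by
  rw [fourier_coe_apply, circleMap_zero, mul_div_cancel_left₀ _ (Complex.ofReal_ne_zero.2 hR),
    ← Complex.exp_nat_mul]
  congr 1
  field_simp
  push_cast
  ring

theorem exists_differentiable_re_circleMap_eq_re_mul_fourier (hR : R ≠ 0) (n : ℤ) (a : ℂ) :
    ∃ Q : ℂ → ℂ, Differentiable ℂ Q ∧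
      ∀ θ : ℝ, (Q (circleMap 0 R θ)).re = (a * fourier n (θ : AddCircle (2 * π))).re := by
  obtain ⟨m, rfl | rfl⟩ := Int.eq_nat_or_neg n
  · exact ⟨fun w => a * (w / R) ^ m, by fun_prop, fun θ => by
      rw [fourier_natCast_coe_eq_pow hR]⟩
  · refine ⟨fun w => (starRingEnd ℂ a) * (w / R) ^ m, by fun_prop, fun θ => ?_⟩
    rw [fourier_neg, fourier_natCast_coe_eq_pow hR, ← Complex.conj_re, map_mul,
      Complex.conj_conj]

theorem exists_differentiable_re_circleMap_eq_of_mem_span_fourier (hR : R ≠ 0)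
    {p : C(AddCircle (2 * π), ℂ)} (hp : p ∈ Submodule.span ℂ (range fourier)) :
    ∃ Q : ℂ → ℂ, Differentiable ℂ Q ∧
      ∀ θ : ℝ, (Q (circleMap 0 R θ)).re = (p θ).re := by
  -- strengthened so that the induction survives multiplication by complex scalars
  suffices ∀ a : ℂ, ∃ Q : ℂ → ℂ, Differentiable ℂ Q ∧
      ∀ θ : ℝ, (Q (circleMap 0 R θ)).re = (a * p θ).re by
    simpa using this 1
  induction hp using Submodule.span_induction with
  | mem _ hq =>
    obtain ⟨n, rfl⟩ := hq
    exact exists_differentiable_re_circleMap_eq_re_mul_fourier hR n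
  | zero => exact fun _ => ⟨0, differentiable_const 0, by simp⟩
  | add q₁ q₂ _ _ h₁ h₂ =>
    intro a
    obtain ⟨Q₁, hQ₁, hre₁⟩ := h₁ a
    obtain ⟨Q₂, hQ₂, hre₂⟩ := h₂ a
    exact ⟨Q₁ + Q₂, hQ₁.add hQ₂, fun θ => by simp [hre₁, hre₂, mul_add]⟩
  | smul b q _ h =>
    intro a
    obtain ⟨Q, hQ, hre⟩ := h (a * b)
    exact ⟨Q, hQ, fun θ => by simp [hre, mul_assoc]⟩

theorem exists_differentiable_abs_re_sub_lt (hR : 0 < R) {g : ℂ → ℝ}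
    (hg : ContinuousOn g (sphere 0 R)) {ε : ℝ} (hε : 0 < ε) :
    ∃ Q : ℂ → ℂ, Differentiable ℂ Q ∧ ∀ ζ ∈ sphere (0 : ℂ) R, |(Q ζ).re - g ζ| < ε := by
  have hper : Function.Periodic (fun θ => (g (circleMap 0 R θ) : ℂ)) (2 * π) := fun θ => by
    simp only [periodic_circleMap 0 R θ]
  have hcont : Continuous (fun θ => (g (circleMap 0 R θ) : ℂ)) :=
    Complex.continuous_ofReal.comp <| hg.comp_continuous (continuous_circleMap 0 R)
      fun θ => circleMap_mem_sphere 0 hR.le θ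
  let v : C(AddCircle (2 * π), ℂ) := ⟨hper.lift, hcont.quotient_liftOn' _⟩
  have hv : v ∈ (Submodule.span ℂ (range fourier)).topologicalClosure := by
    rw [span_fourier_closure_eq_top]; trivial
  obtain ⟨p, hp, hdist⟩ := mem_closure_iff.1 hv ε hε
  obtain ⟨Q, hQ, hre⟩ := exists_differentiable_re_circleMap_eq_of_mem_span_fourier hR.ne' hp
  refine ⟨Q, hQ, fun ζ hζ => ?_⟩
  obtain ⟨θ, rfl⟩ : ζ ∈ range (circleMap 0 R) := by rwa [range_circleMap, abs_of_pos hR]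
  calc |(Q (circleMap 0 R θ)).re - g (circleMap 0 R θ)|
      = |(v θ - p θ).re| := by
        rw [hre, abs_sub_comm, Complex.sub_re, show v θ = g (circleMap 0 R θ) from hper.lift_coe θ,
          Complex.ofReal_re]
    _ ≤ ‖v θ - p θ‖ := Complex.abs_re_le_norm _
    _ < ε := by simpa [dist_eq_norm] using (ContinuousMap.dist_lt_iff hε).1 hdist θ

theorem exists_differentiable_re_mem_Icc (hR : 0 < R) {g : ℂ → ℝ}
    (hg : ContinuousOn g (sphere 0 R)) {ε : ℝ} (hε : 0 < ε) :
    ∃ Q : ℂ → ℂ, Differentiable ℂ Q ∧ ∀ ζ ∈ sphere (0 : ℂ) R, (Q ζ).re ∈ Icc (g ζ) (g ζ + ε) := by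
  obtain ⟨Q, hQ, happrox⟩ := exists_differentiable_abs_re_sub_lt hR hg (half_pos hε)
  refine ⟨fun w => Q w + (ε / 2 : ℝ), hQ.add_const _, fun ζ hζ => ?_⟩
  have := abs_lt.1 (happrox ζ hζ)
  constructor <;> simp only [Complex.add_re, Complex.ofReal_re] <;> linarith

end FourierApproximation

theorem InnerProductSpace.HarmonicOnNhd.le_mul_circleAverage_of_nonneg {h : ℂ → ℝ} {c w : ℂ}
    {R : ℝ} (hh : HarmonicOnNhd h (closedBall c R)) (hw : w ∈ ball c R)
    (hnn : ∀ ζ ∈ sphere c R, 0 ≤ h ζ) :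
    h w ≤ (R + ‖w - c‖) / (R - ‖w - c‖) * circleAverage h c R := by
  have hR : 0 < R := pos_of_mem_ball hw
  set K := (R + ‖w - c‖) / (R - ‖w - c‖)
  have hcont : ContinuousOn h (sphere c R) := fun ζ hζ =>
    (hh ζ (sphere_subset_closedBall hζ)).1.continuousAt.continuousWithinAt
  have hP : ContinuousOn (poissonKernel c w) (sphere c R) := by
    intro ζ hζ
    have : ζ - c - (w - c) ≠ 0 := by
      rw [sub_sub_sub_cancel_right, sub_ne_zero]
      rintro rfl
      exact (mem_ball.1 hw).ne (mem_sphere.1 hζ)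
    unfold poissonKernel
    fun_prop (disch := simpa using this)
  have hkernel : ∀ ζ ∈ sphere c R, poissonKernel c w ζ ≤ K := by
    intro ζ hζ
    rw [poissonKernel_eq_re_herglotzRieszKernel, Function.comp_apply, herglotzRieszKernel_def]
    exact re_herglotzRieszKernel_le hζ hw
  rw [← abs_of_pos hR] at hcont hP hkernel hnn
  calc h w = circleAverage (poissonKernel c w • h) c R :=
        (hh.circleAverage_poissonKernel_smul hw).symm
    _ ≤ circleAverage (fun ζ => K * h ζ) c R :=
        circleAverage_mono (hP.smul hcont).circleIntegrable'
          (continuousOn_const.mul hcont).circleIntegrable'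
          fun ζ hζ => mul_le_mul_of_nonneg_right (hkernel ζ hζ) (hnn ζ hζ)
    _ = K * circleAverage h c R := circleAverage_fun_smul (𝕜 := ℝ)

theorem norm_le_exp_re_of_forall_mem_frontier {E : Type*} [NormedAddCommGroup E]
    [NormedSpace ℂ E] {f : ℂ → E} {Q : ℂ → ℂ} {U : Set ℂ} {z : ℂ} (hU : Bornology.IsBounded U)
    (hf : DiffContOnCl ℂ f U) (hQ : DiffContOnCl ℂ Q U)
    (hfr : ∀ ζ ∈ frontier U, ‖f ζ‖ ≤ exp (Q ζ).re) (hz : z ∈ closure U) :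
    ‖f z‖ ≤ exp (Q z).re := by
  have hnorm : ∀ ζ, ‖Complex.exp (-Q ζ) • f ζ‖ = (exp (Q ζ).re)⁻¹ * ‖f ζ‖ := fun ζ => by
    rw [norm_smul, Complex.norm_exp, Complex.neg_re, Real.exp_neg]
  have hF : DiffContOnCl ℂ (fun ζ => Complex.exp (-Q ζ) • f ζ) U :=
    DiffContOnCl.smul ⟨hQ.1.neg.cexp, hQ.2.neg.cexp⟩ hf
  have h := Complex.norm_le_of_forall_mem_frontier_norm_le hU hF (C := 1)
    (fun ζ hζ => by rw [hnorm, inv_mul_le_iff₀ (exp_pos _), mul_one]; exact hfr ζ hζ) hz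
  rwa [hnorm, inv_mul_le_iff₀ (exp_pos _), mul_one] at h

theorem DiffContOnCl.norm_le_exp_mul_circleAverage_posLog {E : Type*} [NormedAddCommGroup E]
    [NormedSpace ℂ E] {f : ℂ → E} {R : ℝ} {w : ℂ} (hf : DiffContOnCl ℂ f (ball 0 R))
    (hw : w ∈ ball 0 R) :
    ‖f w‖ ≤ exp ((R + ‖w‖) / (R - ‖w‖) * Real.circleAverage (fun ζ => log⁺ ‖f ζ‖) 0 R) := by
  have hR : 0 < R := pos_of_mem_ball hw
  set K := (R + ‖w‖) / (R - ‖w‖)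
  set A := Real.circleAverage (fun ζ => log⁺ ‖f ζ‖) 0 R
  have hK : 0 < K := div_pos (by positivity) (sub_pos.2 (mem_ball_zero_iff.1 hw))
  have hg : ContinuousOn (fun ζ => log⁺ ‖f ζ‖) (sphere 0 R) :=
    continuous_posLog.comp_continuousOn <| (hf.2.mono <| by
      rw [closure_ball 0 hR.ne']; exact sphere_subset_closedBall).norm
  rcases (norm_nonneg (f w)).eq_or_lt with h0 | hpos
  · rw [← h0]; positivity
  rw [← log_le_iff_le_exp hpos]
  refine le_of_forall_pos_le_add fun δ hδ => ?_
  obtain ⟨Q, hQ, hQg⟩ := exists_differentiable_re_mem_Icc hR hg (div_pos hδ hK)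
  have hmax : ‖f w‖ ≤ exp (Q w).re := by
    refine norm_le_exp_re_of_forall_mem_frontier isBounded_ball hf hQ.diffContOnCl
      (fun ζ hζ => ?_) (subset_closure hw)
    rw [frontier_ball 0 hR.ne'] at hζ
    exact (le_exp_log _).trans (exp_le_exp.2 ((le_max_right _ _).trans (hQg ζ hζ).1))
  have hharnack : (Q w).re ≤ K * Real.circleAverage (fun ζ => (Q ζ).re) 0 R := by
    simpa using HarmonicOnNhd.le_mul_circleAverage_of_nonneg
      (fun ζ _ => (hQ.analyticAt ζ).harmonicAt_re) hw
      (fun ζ hζ => posLog_nonneg.trans (hQg ζ hζ).1)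
  rw [← abs_of_pos hR] at hg hQg
  have havg : Real.circleAverage (fun ζ => (Q ζ).re) 0 R ≤ A + δ / K := by
    calc Real.circleAverage (fun ζ => (Q ζ).re) 0 R
        ≤ Real.circleAverage (fun ζ => log⁺ ‖f ζ‖ + δ / K) 0 R :=
          circleAverage_mono
            (Complex.continuous_re.comp hQ.continuous).continuousOn.circleIntegrable'
            (hg.add continuousOn_const).circleIntegrable' fun ζ hζ => (hQg ζ hζ).2
      _ = A + δ / K := by
          rw [circleAverage_fun_add hg.circleIntegrable' continuousOn_const.circleIntegrable',
            circleAverage_const]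
  calc log ‖f w‖ ≤ (Q w).re := (log_le_iff_le_exp hpos).2 hmax
    _ ≤ K * (A + δ / K) := hharnack.trans (mul_le_mul_of_nonneg_left havg hK.le)
    _ = K * A + δ := by field_simp

/-- Lemma 4.5: there exists a constant `C > 0` such that for every `f` holomorphic in a
neighborhood of the closed disc of radius 3, setting `A = ∫_{3𝕋} ln⁺|f| dm`, one has
`ln ∫_{2𝕋} |f| dm ≤ C · A`. -/
theorem log_integral_le_const_mul : ∃ C : ℝ, 0 < C ∧
    ∀ (f : ℂ → ℂ) (U : Set ℂ), IsOpen U → Metric.closedBall (0:ℂ) 3 ⊆ U →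
      DifferentiableOn ℂ f U →
      Real.log (circAvg 2 (fun ζ => ‖f ζ‖)) ≤
        C * circAvg 3 (fun ζ => max (Real.log (‖f ζ‖)) 0) := by
  refine ⟨5, by norm_num, fun f U _ hsub hf => ?_⟩
  simp only [circAvg_eq_circleAverage, max_comm _ (0 : ℝ), ← posLog_apply]
  set A := circleAverage (fun ζ => log⁺ ‖f ζ‖) 0 3
  have hfd : DiffContOnCl ℂ f (ball 0 3) :=
    (hf.mono (by rwa [closure_ball 0 three_ne_zero])).diffContOnCl
  have hbound : ∀ ζ ∈ sphere (0 : ℂ) |2|, ‖f ζ‖ ≤ exp (5 * A) := by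
    intro ζ hζ
    have hζ2 : ‖ζ‖ = 2 := by simpa using hζ
    have := hfd.norm_le_exp_mul_circleAverage_posLog (w := ζ) (by simp [hζ2]; norm_num)
    rwa [hζ2, show ((3 : ℝ) + 2) / (3 - 2) = 5 by norm_num] at this
  have hint : CircleIntegrable (fun ζ => ‖f ζ‖) 0 2 :=
    (hf.continuousOn.norm.mono <| sphere_subset_closedBall.trans <|
      (closedBall_subset_closedBall (by norm_num)).trans hsub).circleIntegrable'
  obtain h0 | hpos := (circleAverage_nonneg_of_nonneg fun _ _ => norm_nonneg _ :
    0 ≤ circleAverage (fun ζ => ‖f ζ‖) 0 2).eq_or_lt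
  · rw [← h0, log_zero]
    exact mul_nonneg (by norm_num) (circleAverage_nonneg_of_nonneg fun _ _ => posLog_nonneg)
  · exact (log_le_iff_le_exp hpos).2 (circleAverage_mono_on_of_le_circle hint hbound)
end

section
/- Let k ≥ 2 be an integer, λ ∈ ℂ \ {0,1}, and h(ζ) = Σ_{m∈ℤ} a_m ζ^m a Laurent series convergent on the punctured unit disc whose principal part Σ_{m<0} a_m ζ^m converges on all of ℂ \ {0}. Then there exists a function β, holomorphic on the left half-plane and 2πi-periodic, such that the map w ↦ h(e^w) + β(kw) − λβ(w) equals w ↦ Σ_{m<0} a_m e^{mw}. Concretely, β(w) = χ(e^w) + a_0/(λ−1) where χ(ζ) = Σ_{l=0}^{∞} λ^{−(l+1)} h_+(ζ^{k^l}) with h_+(ζ) = Σ_{m>0} a_m ζ^m. -/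
/-!
Split `h = a₀ + h₊ + h₋` with `h₊(ζ) = Σ_{m>0} a_m ζ^m` (`laurentPosPart a`). For
`β = χ ∘ exp + a₀/(λ-1)` the required identity becomes `λ χ(ζ) - χ(ζ^k) = h₊(ζ)` on the unit
disc, solved by `χ(ζ) = Σ_l λ^{-(l+1)} h₊(ζ^{k^l})` (`powerMapSeries λ k h₊`). Since `h₊(0) = 0`,
`|h₊(z)| ≤ C|z|` on each closed subdisc `|z| ≤ r < 1`, so the terms are `O(|λ|^{-l} r^{k^l})`:
the doubly exponential decay beats any geometric growth of `λ^{-l}`, and the series converges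
locally uniformly. Periodicity of `β` comes from that of `exp`.
-/

open Filter Metric Set

theorem summable_pow_mul_pow_pow (c : ℝ) {r : ℝ} (hr0 : 0 ≤ r) (hr1 : r < 1) {k : ℕ}
    (hk : 1 < k) : Summable fun l : ℕ => c ^ l * r ^ k ^ l := by
  have hlim : Tendsto (fun l : ℕ => |c| * r ^ k ^ l) atTop (nhds 0) := by
    simpa using ((tendsto_pow_atTop_nhds_zero_of_lt_one hr0 hr1).comp
      (tendsto_pow_atTop_atTop_of_one_lt hk)).const_mul |c|
  refine summable_of_ratio_norm_eventually_le one_half_lt_one ?_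
  filter_upwards [hlim.eventually_le_const one_half_pos] with l hl
  have hdouble : r ^ k ^ (l + 1) ≤ r ^ k ^ l * r ^ k ^ l := by
    rw [← pow_add]
    refine pow_le_pow_of_le_one hr0 hr1.le ?_
    rw [pow_succ]
    nlinarith [Nat.one_le_pow l k (by omega)]
  simp only [norm_mul, norm_pow, Real.norm_eq_abs, abs_of_nonneg hr0]
  calc |c| ^ (l + 1) * r ^ k ^ (l + 1)
      ≤ |c| ^ (l + 1) * (r ^ k ^ l * r ^ k ^ l) := by gcongr
    _ = (|c| * r ^ k ^ l) * (|c| ^ l * r ^ k ^ l) := by ring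
    _ ≤ 1 / 2 * (|c| ^ l * r ^ k ^ l) := by gcongr

theorem exists_norm_le_mul_norm_of_differentiableOn_ball {E : Type*} [NormedAddCommGroup E]
    [NormedSpace ℂ E] [CompleteSpace E] {g : ℂ → E} {r R : ℝ}
    (hg : DifferentiableOn ℂ g (ball 0 R)) (hg0 : g 0 = 0) (hr0 : 0 ≤ r) (hrR : r < R) :
    ∃ C, 0 ≤ C ∧ ∀ z : ℂ, ‖z‖ ≤ r → ‖g z‖ ≤ C * ‖z‖ := by
  have hslope : ContinuousOn (dslope g 0) (closedBall 0 r) :=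
    ((Complex.differentiableOn_dslope (ball_mem_nhds 0 (hr0.trans_lt hrR))).2
      hg).continuousOn.mono (closedBall_subset_ball hrR)
  obtain ⟨C, hC⟩ := (isCompact_closedBall 0 r).exists_bound_of_continuousOn hslope
  refine ⟨C, (norm_nonneg _).trans (hC 0 (mem_closedBall_self hr0)), fun z hz => ?_⟩
  have hfactor : g z = z • dslope g 0 z := by simpa [hg0] using (sub_smul_dslope g 0 z).symm
  rw [hfactor, norm_smul, mul_comm]
  exact mul_le_mul_of_nonneg_right (hC z (by simpa using hz)) (norm_nonneg z)

noncomputable def powerMapSeries (lam : ℂ) (k : ℕ) (g : ℂ → ℂ) (ζ : ℂ) : ℂ :=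
  ∑' l : ℕ, (lam ^ (l + 1))⁻¹ * g (ζ ^ k ^ l)

section powerMapSeries

variable {lam : ℂ} {k : ℕ} {g : ℂ → ℂ}

theorem exists_summable_bound_powerMapSeries (hk : 1 < k) (hg : DifferentiableOn ℂ g (ball 0 1))
    (hg0 : g 0 = 0) {r : ℝ} (hr0 : 0 ≤ r) (hr1 : r < 1) :
    ∃ u : ℕ → ℝ, Summable u ∧
      ∀ (l : ℕ) (z : ℂ), ‖z‖ ≤ r → ‖(lam ^ (l + 1))⁻¹ * g (z ^ k ^ l)‖ ≤ u l := by
  obtain ⟨C, hC0, hC⟩ := exists_norm_le_mul_norm_of_differentiableOn_ball hg hg0 hr0 hr1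
  refine ⟨fun l => C * ‖lam‖⁻¹ * (‖lam‖⁻¹ ^ l * r ^ k ^ l),
    (summable_pow_mul_pow_pow _ hr0 hr1 hk).mul_left _, fun l z hz => ?_⟩
  have hzk : ‖z ^ k ^ l‖ ≤ r ^ k ^ l := by
    rw [norm_pow]; exact pow_le_pow_left₀ (norm_nonneg z) hz _
  have hzk1 : ‖z ^ k ^ l‖ ≤ r := by
    rw [norm_pow]
    exact (pow_le_of_le_one (norm_nonneg z) (hz.trans hr1.le) (by positivity)).trans hz
  calc ‖(lam ^ (l + 1))⁻¹ * g (z ^ k ^ l)‖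
      = ‖lam‖⁻¹ ^ (l + 1) * ‖g (z ^ k ^ l)‖ := by rw [norm_mul, norm_inv, norm_pow, inv_pow]
    _ ≤ ‖lam‖⁻¹ ^ (l + 1) * (C * r ^ k ^ l) := by
        gcongr; exact (hC _ hzk1).trans (by gcongr)
    _ = C * ‖lam‖⁻¹ * (‖lam‖⁻¹ ^ l * r ^ k ^ l) := by ring

theorem differentiableOn_powerMapSeries (hk : 1 < k) (hg : DifferentiableOn ℂ g (ball 0 1))
    (hg0 : g 0 = 0) : DifferentiableOn ℂ (powerMapSeries lam k g) (ball 0 1) := by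
  intro z hz
  obtain ⟨r, hzr, hr1⟩ := exists_between (mem_ball_zero_iff.1 hz)
  obtain ⟨u, hu, hbound⟩ :=
    exists_summable_bound_powerMapSeries (lam := lam) hk hg hg0 ((norm_nonneg z).trans hzr.le) hr1
  have hmaps : ∀ l : ℕ, MapsTo (fun w : ℂ => w ^ k ^ l) (ball 0 r) (ball 0 1) := fun l w hw => by
    rw [mem_ball_zero_iff, norm_pow] at *
    exact pow_lt_one₀ (norm_nonneg w) (hw.trans hr1) (by positivity)
  have hdiff : DifferentiableOn ℂ (powerMapSeries lam k g) (ball 0 r) :=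
    Complex.differentiableOn_tsum_of_summable_norm hu
      (fun l => ((hg.comp (differentiable_pow _).differentiableOn (hmaps l))).const_mul _)
      isOpen_ball (fun l w hw => hbound l w (mem_ball_zero_iff.1 hw).le)
  exact (hdiff.differentiableAt
    (isOpen_ball.mem_nhds (mem_ball_zero_iff.2 hzr))).differentiableWithinAt

theorem mul_powerMapSeries_sub_comp_pow (hlam : lam ≠ 0) (hk : 1 < k)
    (hg : DifferentiableOn ℂ g (ball 0 1)) (hg0 : g 0 = 0) {ζ : ℂ} (hζ : ‖ζ‖ < 1) :
    lam * powerMapSeries lam k g ζ - powerMapSeries lam k g (ζ ^ k) = g ζ := by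
  obtain ⟨u, hu, hbound⟩ :=
    exists_summable_bound_powerMapSeries (lam := lam) hk hg hg0 (norm_nonneg ζ) hζ
  have hsum : Summable fun l : ℕ => (lam ^ (l + 1))⁻¹ * g (ζ ^ k ^ l) :=
    .of_norm_bounded hu fun l => hbound l ζ le_rfl
  have hshift : ∀ l : ℕ, lam * ((lam ^ (l + 1 + 1))⁻¹ * g (ζ ^ k ^ (l + 1)))
      = (lam ^ (l + 1))⁻¹ * g ((ζ ^ k) ^ k ^ l) := fun l => by
    rw [pow_succ' k l, pow_mul, pow_succ' lam (l + 1), mul_inv, ← mul_assoc, ← mul_assoc,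
      mul_inv_cancel₀ hlam, one_mul]
  rw [powerMapSeries, powerMapSeries, ← tsum_mul_left, (hsum.mul_left lam).tsum_eq_zero_add]
  simp only [hshift, zero_add, pow_one, pow_zero, mul_inv_cancel_left₀ hlam]
  ring

end powerMapSeries

noncomputable def laurentPosPart (a : ℤ → ℂ) (ζ : ℂ) : ℂ :=
  ∑' n : ℕ, a (n + 1) * ζ ^ (n + 1)

section laurentPosPart

variable {a : ℤ → ℂ}

@[simp]
theorem laurentPosPart_zero : laurentPosPart a 0 = 0 := by
  simp [laurentPosPart]

theorem differentiableOn_laurentPosPart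
    (ha : ∀ ζ : ℂ, ζ ≠ 0 → ‖ζ‖ < 1 → Summable fun m : ℤ => a m * ζ ^ m) :
    DifferentiableOn ℂ (laurentPosPart a) (ball 0 1) := by
  intro z hz
  obtain ⟨ρ, hzρ, hρ1⟩ := exists_between (mem_ball_zero_iff.1 hz)
  have hρ0 : 0 < ρ := (norm_nonneg z).trans_lt hzρ
  have hsum : Summable fun n : ℕ => ‖a (n + 1) * (ρ : ℂ) ^ (n + 1)‖ := by
    refine summable_norm_iff.2 ?_
    have hshift : Function.Injective fun n : ℕ => (n : ℤ) + 1 := fun m n hmn => by simpa using hmn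
    have := (ha ρ (by exact_mod_cast hρ0.ne')
      (by simpa [abs_of_pos hρ0] using hρ1)).comp_injective hshift
    simpa [Function.comp_def, ← zpow_natCast] using this
  have hdiff : DifferentiableOn ℂ (laurentPosPart a) (ball 0 ρ) :=
    Complex.differentiableOn_tsum_of_summable_norm hsum
      (fun n => ((differentiable_pow _).const_mul _).differentiableOn) isOpen_ball
      fun n w hw => by
        rw [mem_ball_zero_iff] at hw
        simp only [norm_mul, norm_pow, Complex.norm_real, Real.norm_of_nonneg hρ0.le]
        gcongr
  exact (hdiff.differentiableAt
    (isOpen_ball.mem_nhds (mem_ball_zero_iff.2 hzρ))).differentiableWithinAt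

theorem HasSum.eq_add_laurentPosPart_add {ζ s : ℂ} (hs : HasSum (fun m : ℤ => a m * ζ ^ m) s)
    (hprin : Summable fun n : ℕ => a (-(n : ℤ) - 1) * ζ ^ (-(n : ℤ) - 1)) :
    s = a 0 + laurentPosPart a ζ + ∑' n : ℕ, a (-(n : ℤ) - 1) * ζ ^ (-(n : ℤ) - 1) := by
  have hnonneg : Summable fun n : ℕ => a n * ζ ^ (n : ℤ) :=
    hs.summable.comp_injective (i := ((↑) : ℕ → ℤ)) Nat.cast_injective
  have hneg : ∀ n : ℕ, -(n : ℤ) - 1 = -(n + 1) := fun n => by ring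
  simp only [hneg] at hprin ⊢
  rw [← hs.tsum_eq, tsum_of_nat_of_neg_add_one (f := fun m : ℤ => a m * ζ ^ m) hnonneg hprin,
    hnonneg.tsum_eq_zero_add]
  simp only [laurentPosPart, Nat.cast_zero, zpow_zero, mul_one]
  congr 3 with n

end laurentPosPart

/-- Section 4 (killing the non-negative part of the cocycle): let `k ≥ 2`,
`λ ∈ ℂ \ {0,1}` and `h(ζ) = Σ_{m∈ℤ} a_m ζ^m` a Laurent series convergent on the punctured
unit disc whose principal part `Σ_{m<0} a_m ζ^m` converges on all of `ℂ \ {0}`. Then there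
exists `β` holomorphic on the left half-plane and `2πi`-periodic such that
`h(e^w) + β(kw) − λ β(w) = Σ_{m<0} a_m e^{mw}` for all `w` with `Re w < 0`. -/
theorem kill_nonnegative_part (k : ℕ) (hk : 2 ≤ k) (lam : ℂ)
    (hlam0 : lam ≠ 0) (hlam1 : lam ≠ 1)
    (a : ℤ → ℂ) (h : ℂ → ℂ)
    (hh : ∀ ζ : ℂ, ζ ≠ 0 → ‖ζ‖ < 1 →
      HasSum (fun m : ℤ => a m * ζ ^ m) (h ζ))
    (hprin : ∀ ζ : ℂ, ζ ≠ 0 →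
      Summable (fun m : ℕ => a (-(m:ℤ) - 1) * ζ ^ (-(m:ℤ) - 1))) :
    ∃ β : ℂ → ℂ, DifferentiableOn ℂ β {w : ℂ | w.re < 0} ∧
      (∀ w : ℂ, w.re < 0 → β (w + 2 * Real.pi * Complex.I) = β w) ∧
      (∀ w : ℂ, w.re < 0 →
        h (Complex.exp w) + β ((k:ℂ) * w) - lam * β w =
          ∑' m : ℕ, a (-(m:ℤ) - 1) * Complex.exp ((-(m:ℤ) - 1) * w)) := by
  have hpos := differentiableOn_laurentPosPart fun ζ h0 h1 => (hh ζ h0 h1).summable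
  set χ := powerMapSeries lam k (laurentPosPart a)
  have hexp : ∀ w : ℂ, w.re < 0 → ‖Complex.exp w‖ < 1 := fun w hw => by
    simpa [Complex.norm_exp] using hw
  refine ⟨fun w => χ (Complex.exp w) + a 0 / (lam - 1), ?_,
    fun w _ => congrArg (χ · + a 0 / (lam - 1)) (Complex.exp_periodic w), fun w hw => ?_⟩
  · exact ((differentiableOn_powerMapSeries hk hpos laurentPosPart_zero).comp
      Complex.differentiable_exp.differentiableOn
      fun w hw => mem_ball_zero_iff.2 (hexp w hw)).add_const _
  · have hsplit := (hh _ (Complex.exp_ne_zero w) (hexp w hw)).eq_add_laurentPosPart_add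
      (hprin _ (Complex.exp_ne_zero w))
    have hχ := mul_powerMapSeries_sub_comp_pow hlam0 hk hpos laurentPosPart_zero (hexp w hw)
    have hprin_exp : ∀ n : ℕ,
        Complex.exp w ^ (-(n : ℤ) - 1) = Complex.exp ((-(n : ℤ) - 1) * w) :=
      fun n => by rw [← Complex.exp_int_mul]; push_cast; ring_nf
    have hconst : (lam - 1) * (a 0 / (lam - 1)) = a 0 := mul_div_cancel₀ _ (sub_ne_zero.2 hlam1)
    simp only [hprin_exp] at hsplit
    dsimp only
    rw [Complex.exp_nat_mul, hsplit]
    linear_combination -hχ - hconst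
end
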